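/- arXiv:math/0410210 — 3 statements merged into one kernel-verified Lean document; each statement's English description precedes it below -/
import Mathlib

section
/- Let k ≥ 2 and let f_1, f_2, … be automorphisms of ℂ^k. Suppose there exist constants 0 < a < b < 1 with b² < a such that for every n ≥ 1 and every z ∈ ℂ^k with ‖z‖ ≤ 1 one has a‖z‖ ≤ ‖f_n(z)‖ ≤ b‖z‖. Then the basin of attraction Ω* = {z ∈ ℂ^k : f_n ∘ ⋯ ∘ f_1(z) → 0 as n → ∞} is biholomorphic to ℂ^k. -/
open Filter Metric Set
open scoped ENNReal

noncomputable section

/-- `ℂ^k` with the Euclidean norm. -/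
abbrev Ek (k : ℕ) := EuclideanSpace ℂ (Fin k)

/-- `f` is an automorphism of `ℂ^k`: a holomorphic bijection with holomorphic inverse. -/
def IsAutomorphismOf {k : ℕ} (f : Ek k → Ek k) : Prop :=
  Differentiable ℂ f ∧ ∃ g : Ek k → Ek k, Differentiable ℂ g ∧
    (∀ z, g (f z) = z) ∧ (∀ z, f (g z) = z)

/-- `seqComp f n = f n ∘ ⋯ ∘ f 1` (and `seqComp f 0 = id`). -/
def seqComp {k : ℕ} (f : ℕ → Ek k → Ek k) : ℕ → Ek k → Ek k
  | 0 => id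
  | n + 1 => f (n + 1) ∘ seqComp f n

/-- `Ω` is biholomorphic to `ℂ^k`: there is a holomorphic bijection `H : Ω → ℂ^k`
with holomorphic inverse `G`. -/
def BiholToCk {k : ℕ} (Ω : Set (Ek k)) : Prop :=
  ∃ H G : Ek k → Ek k,
    DifferentiableOn ℂ H Ω ∧ Differentiable ℂ G ∧
    (∀ z ∈ Ω, G (H z) = z) ∧ (∀ w, G w ∈ Ω ∧ H (G w) = w)

/-!
The linear parts `Λ n = Df_n(0)` satisfy `a‖v‖ ≤ ‖Λ n v‖ ≤ b‖v‖`, and by the Schwarz lemma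
`f_n = Λ n + O(‖z‖²)` on the unit ball. Consequently the maps `(Λ n ∘ ⋯ ∘ Λ 1)⁻¹ ∘ f_n ∘ ⋯ ∘ f_1`
converge on the unit ball at the geometric rate `b² / a < 1` to a holomorphic map
`H = id + O(‖z‖²)`, which near `0` is a small perturbation of the identity. The same construction
for the shifted sequences `f_{m+1}, f_{m+2}, …` gives `H = (Λ m ∘ ⋯ ∘ Λ 1)⁻¹ ∘ H_m ∘ f_m ∘ ⋯ ∘ f_1`
on the basin. Every point of the basin is eventually mapped near `0`, where the `H_m` are
uniformly invertible, so `H` is injective on the basin; and `Λ m ∘ ⋯ ∘ Λ 1` brings every point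
near `0`, so `H` is onto, with the holomorphic local inverses
`(f_m ∘ ⋯ ∘ f_1)⁻¹ ∘ H_m⁻¹ ∘ (Λ m ∘ ⋯ ∘ Λ 1)`.
-/

open Function
open scoped Topology

section ComplexAnalysis

variable {E F : Type*} [NormedAddCommGroup E] [NormedSpace ℂ E]
  [NormedAddCommGroup F] [NormedSpace ℂ F]

theorem norm_fderiv_le_of_forall_norm_le {u : E → F} {x : E} {r M : ℝ}
    (hu : DifferentiableOn ℂ u (ball x r)) (hr : 0 < r) (hM : ∀ y ∈ ball x r, ‖u y‖ ≤ M) :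
    ‖fderiv ℂ u x‖ ≤ 2 * M / r := by
  refine Complex.norm_fderiv_le_div_of_mapsTo_ball hu (fun y hy => ?_) hr
  rw [mem_closedBall, dist_eq_norm]
  linarith [norm_sub_le (u y) (u x), hM y hy, hM x (mem_ball_self hr)]

theorem differentiableOn_of_tendstoUniformlyOn [CompleteSpace F] {u : ℕ → E → F} {g : E → F}
    {U : Set E} (hU : IsOpen U) (hu : ∀ n, DifferentiableOn ℂ (u n) U)
    (hug : TendstoUniformlyOn u g atTop U) : DifferentiableOn ℂ g U := by
  intro x hx
  obtain ⟨ε, hε, hεU⟩ := Metric.isOpen_iff.mp hU x hx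
  have hball : ∀ y ∈ ball x (ε / 2), ball y (ε / 2) ⊆ U := fun y hy =>
    (ball_subset_ball' (by rw [mem_ball] at hy; linarith)).trans hεU
  -- Cauchy estimates turn uniform Cauchy-ness of `u` into that of its derivatives.
  have hcauchy : UniformCauchySeqOn (fun n => fderiv ℂ (u n)) atTop (ball x (ε / 2)) := by
    rw [Metric.uniformCauchySeqOn_iff]
    intro δ hδ
    obtain ⟨N, hN⟩ := Metric.uniformCauchySeqOn_iff.mp hug.uniformCauchySeqOn (δ * ε / 8)
      (by positivity)
    refine ⟨N, fun m hm n hn y hy => ?_⟩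
    have hdiff : ∀ k, DifferentiableOn ℂ (u k) (ball y (ε / 2)) := fun k => (hu k).mono (hball y hy)
    have hderiv := norm_fderiv_le_of_forall_norm_le ((hdiff m).sub (hdiff n)) (by positivity)
      (fun w hw => (dist_eq_norm (u m w) (u n w) ▸ hN m hm n hn w (hball y hy hw)).le)
    have hat : ∀ k, DifferentiableAt ℂ (u k) y := fun k =>
      (hu k).differentiableAt (hU.mem_nhds (hball y hy (mem_ball_self (by positivity))))
    rw [fderiv_sub (hat m) (hat n)] at hderiv
    rw [dist_eq_norm]
    calc ‖fderiv ℂ (u m) y - fderiv ℂ (u n) y‖ ≤ 2 * (δ * ε / 8) / (ε / 2) := hderiv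
      _ < δ := by field_simp; linarith
  have hlim : ∀ y ∈ ball x (ε / 2), Tendsto (fun n => fderiv ℂ (u n) y) atTop
      (𝓝 (limUnder atTop fun n => fderiv ℂ (u n) y)) := fun y hy =>
    (hcauchy.cauchySeq hy).tendsto_limUnder
  have hx' : x ∈ ball x (ε / 2) := mem_ball_self (by positivity)
  refine (hasFDerivAt_of_tendstoUniformlyOn isOpen_ball
    (hcauchy.tendstoUniformlyOn_of_tendsto hlim) (fun n y hy => ?_)
    (fun y hy => hug.tendsto_at (hball x hx' hy)) hx').differentiableAt.differentiableWithinAt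
  exact ((hu n).differentiableAt (hU.mem_nhds (hball x hx' hy))).hasFDerivAt

theorem norm_sub_fderiv_le_mul_sq {f : E → F} {R M : ℝ} {z : E}
    (hf : DifferentiableOn ℂ f (ball 0 R)) (h0 : f 0 = 0)
    (hmaps : MapsTo (fun w => f w - fderiv ℂ f 0 w) (ball 0 R) (closedBall 0 M))
    (hz : z ∈ ball 0 R) : ‖f z - fderiv ℂ f 0 z‖ ≤ M * (‖z‖ / R) ^ 2 := by
  have hR : 0 < R := nonempty_ball.mp ⟨z, hz⟩
  have hfd : HasFDerivAt f (fderiv ℂ f 0) 0 :=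
    (hf.differentiableAt (ball_mem_nhds 0 hR)).hasFDerivAt
  have hlittle : (fun w => (f w - fderiv ℂ f 0 w) - (f 0 - fderiv ℂ f 0 0)) =o[𝓝 0]
      fun w => ‖w - 0‖ ^ 1 := by
    simpa [h0] using hfd.isLittleO.norm_right
  simpa [h0] using Complex.dist_le_mul_div_pow_of_mapsTo_ball_of_isLittleO
    (hf.sub (fderiv ℂ f 0).differentiable.differentiableOn)
    (fun w hw => by simpa [h0] using hmaps hw) hlittle hz

theorem HasFDerivAt.mul_norm_le_norm_apply {f : E → F} {L : E →L[ℂ] F} {c : ℝ}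
    (hf : HasFDerivAt f L 0) (h0 : f 0 = 0) (hc : ∀ᶠ z in 𝓝 0, c * ‖z‖ ≤ ‖f z‖) (v : E) :
    c * ‖v‖ ≤ ‖L v‖ := by
  have hv : HasDerivAt (fun t : ℂ => t • v) v 0 := by
    simpa using (hasDerivAt_id (0 : ℂ)).smul_const v
  have hslope := (hasDerivAt_iff_tendsto_slope_zero.mp
    ((zero_smul ℂ v ▸ hf).comp_hasDerivAt (0 : ℂ) hv)).norm
  simp only [comp_apply, zero_add, zero_smul, h0, sub_zero] at hslope
  have hsmall : ∀ᶠ t : ℂ in 𝓝[≠] 0, c * ‖t • v‖ ≤ ‖f (t • v)‖ :=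
    nhdsWithin_le_nhds (((continuous_id.smul continuous_const).tendsto' (0 : ℂ) 0
      (by simp)).eventually hc)
  refine ge_of_tendsto hslope ?_
  filter_upwards [hsmall, self_mem_nhdsWithin] with t ht ht0
  have ht0' : 0 < ‖t‖ := norm_pos_iff.mpr ht0
  rw [norm_smul] at ht
  rw [norm_smul, norm_inv, le_inv_mul_iff₀ ht0']
  linarith

theorem fderiv_comp_fderiv_of_leftInverse {f : E → F} {g : F → E} {x : E}
    (hg : DifferentiableAt ℂ g (f x)) (hf : DifferentiableAt ℂ f x) (hgf : LeftInverse g f) :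
    (fderiv ℂ g (f x)).comp (fderiv ℂ f x) = ContinuousLinearMap.id ℂ E := by
  rw [← fderiv_comp x hg hf, hgf.comp_eq_id, fderiv_id]

def IsBiholomorphism (f : E → F) : Prop :=
  Differentiable ℂ f ∧ ∃ g : F → E, Differentiable ℂ g ∧ LeftInverse g f ∧ RightInverse g f

theorem IsBiholomorphism.id : IsBiholomorphism (id : E → E) :=
  ⟨differentiable_id, _root_.id, differentiable_id, fun _ => rfl, fun _ => rfl⟩

theorem IsBiholomorphism.comp {G : Type*} [NormedAddCommGroup G] [NormedSpace ℂ G] {f : F → G}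
    {g : E → F} (hf : IsBiholomorphism f) (hg : IsBiholomorphism g) :
    IsBiholomorphism (f ∘ g) := by
  obtain ⟨hfd, f', hf'd, hf'l, hf'r⟩ := hf
  obtain ⟨hgd, g', hg'd, hg'l, hg'r⟩ := hg
  exact ⟨hfd.comp hgd, g' ∘ f', hg'd.comp hf'd, hf'l.comp hg'l, hf'r.comp hg'r⟩

def IsBiholomorphism.fderivEquiv {f : E → F} (hf : IsBiholomorphism f) (x : E) : E ≃L[ℂ] F :=
  have hg := hf.2.choose_spec
  .equivOfInverse (fderiv ℂ f x) (fderiv ℂ hf.2.choose (f x))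
    (fun v => by
      simpa using DFunLike.congr_fun
        (fderiv_comp_fderiv_of_leftInverse (hg.1 _) (hf.1 x) hg.2.1) v)
    (fun w => by
      have h := fderiv_comp_fderiv_of_leftInverse (x := f x) (hf.1 _) (hg.1 _) hg.2.2
      rw [hg.2.1 x] at h
      simpa using DFunLike.congr_fun h w)

theorem exists_differentiable_inverse_of_injOn {H : E → F} {Ω : Set E} (hinj : InjOn H Ω)
    (hsec : ∀ ζ, ∃ σ : F → E, DifferentiableAt ℂ σ ζ ∧ ∀ᶠ w in 𝓝 ζ, σ w ∈ Ω ∧ H (σ w) = w) :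
    ∃ G : F → E, Differentiable ℂ G ∧ (∀ z ∈ Ω, G (H z) = z) ∧ ∀ w, G w ∈ Ω ∧ H (G w) = w := by
  choose σ hσd hσ using hsec
  have hG : ∀ w, σ w w ∈ Ω ∧ H (σ w w) = w := fun w => (hσ w).self_of_nhds
  refine ⟨fun w => σ w w, fun ζ => ?_, fun z hz => hinj (hG _).1 hz (hG _).2, hG⟩
  refine (hσd ζ).congr_of_eventuallyEq ?_
  filter_upwards [hσ ζ] with w hw
  exact hinj (hG w).1 hw.1 ((hG w).2.trans hw.2.symm)

theorem exists_continuousLinearEquiv_of_norm_sub_id_lt_one [CompleteSpace E] {L : E →L[ℂ] E}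
    (h : ‖L - ContinuousLinearMap.id ℂ E‖ < 1) : ∃ e : E ≃L[ℂ] E, (e : E →L[ℂ] E) = L :=
  ⟨.ofUnit (Units.oneSub (1 - L) (by rwa [← norm_neg, neg_sub])), by
    ext x; change (1 - (1 - L)) x = L x; rw [sub_sub_cancel]⟩

end ComplexAnalysis

section Composition

variable {α : Type*}

def compSeq (f : ℕ → α → α) : ℕ → α → α
  | 0 => id
  | n + 1 => f (n + 1) ∘ compSeq f n

theorem compSeq_add (f : ℕ → α → α) (m n : ℕ) :
    compSeq f (n + m) = compSeq (fun j => f (j + m)) n ∘ compSeq f m := by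
  induction n with
  | zero => simp [compSeq]
  | succ n ih => rw [Nat.add_right_comm, compSeq, ih, compSeq, Nat.add_right_comm]; rfl

def basin [TopologicalSpace α] [Zero α] (f : ℕ → α → α) : Set α :=
  {z | Tendsto (fun n => compSeq f n z) atTop (𝓝 0)}

end Composition

section Squeezing

variable {E : Type*} [NormedAddCommGroup E] [NormedSpace ℂ E]

structure IsSqueezing (f : ℕ → E → E) (a b : ℝ) : Prop where
  pos : 0 < a
  nonneg : 0 ≤ b
  lt_one : b < 1
  sq_lt : b ^ 2 < a
  isBiholomorphism : ∀ n, 1 ≤ n → IsBiholomorphism (f n)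
  le_norm : ∀ n, 1 ≤ n → ∀ z : E, ‖z‖ ≤ 1 → a * ‖z‖ ≤ ‖f n z‖
  norm_le : ∀ n, 1 ≤ n → ∀ z : E, ‖z‖ ≤ 1 → ‖f n z‖ ≤ b * ‖z‖

/-- On the ball of this radius every `IsSqueezing.conj` is a `1/4`-perturbation of the identity
(`IsSqueezing.norm_fderiv_conj_sub_id_le`). -/
def squeezeRadius (a b : ℝ) : ℝ :=
  min (1 / 2) ((a - b ^ 2) / 64)

theorem norm_lt_one_of_mem_ball_squeezeRadius {F : Type*} [SeminormedAddCommGroup F] {a b : ℝ}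
    {x : F} (hx : x ∈ ball 0 (squeezeRadius a b)) : ‖x‖ < 1 := by
  have h : squeezeRadius a b ≤ 1 / 2 := min_le_left _ _
  linarith [mem_ball_zero_iff.mp hx]

namespace IsSqueezing

variable {f : ℕ → E → E} {a b : ℝ} (S : IsSqueezing f a b)
include S

theorem shift (m : ℕ) : IsSqueezing (fun j => f (j + m)) a b where
  pos := S.pos
  nonneg := S.nonneg
  lt_one := S.lt_one
  sq_lt := S.sq_lt
  isBiholomorphism n hn := S.isBiholomorphism _ (by omega)
  le_norm n hn := S.le_norm _ (by omega)
  norm_le n hn := S.norm_le _ (by omega)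

theorem map_zero {n : ℕ} (hn : 1 ≤ n) : f n 0 = 0 :=
  norm_le_zero_iff.mp (by simpa using S.norm_le n hn 0 (by simp))

theorem compSeq_zero (n : ℕ) : compSeq f n 0 = 0 := by
  induction n with
  | zero => rfl
  | succ n ih => simp [compSeq, ih, S.map_zero]

theorem isBiholomorphism_compSeq (n : ℕ) : IsBiholomorphism (compSeq f n) := by
  induction n with
  | zero => exact IsBiholomorphism.id
  | succ n ih => exact (S.isBiholomorphism _ (by omega)).comp ih

theorem norm_compSeq_le {z : E} (hz : ‖z‖ ≤ 1) (n : ℕ) : ‖compSeq f n z‖ ≤ b ^ n * ‖z‖ := by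
  induction n with
  | zero => simp [compSeq]
  | succ n ih =>
    have hle : ‖compSeq f n z‖ ≤ 1 :=
      ih.trans (mul_le_one₀ (pow_le_one₀ S.nonneg S.lt_one.le) (norm_nonneg z) hz)
    calc ‖f (n + 1) (compSeq f n z)‖ ≤ b * ‖compSeq f n z‖ := S.norm_le _ (by omega) _ hle
      _ ≤ b * (b ^ n * ‖z‖) := by gcongr; exact S.nonneg
      _ = b ^ (n + 1) * ‖z‖ := by ring

theorem le_norm_compSeq {z : E} (hz : ‖z‖ ≤ 1) (n : ℕ) : a ^ n * ‖z‖ ≤ ‖compSeq f n z‖ := by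
  induction n with
  | zero => simp [compSeq]
  | succ n ih =>
    have hle : ‖compSeq f n z‖ ≤ 1 :=
      (S.norm_compSeq_le hz n).trans
        (mul_le_one₀ (pow_le_one₀ S.nonneg S.lt_one.le) (norm_nonneg z) hz)
    calc a ^ (n + 1) * ‖z‖ = a * (a ^ n * ‖z‖) := by ring
      _ ≤ a * ‖compSeq f n z‖ := by gcongr; exact S.pos.le
      _ ≤ ‖f (n + 1) (compSeq f n z)‖ := S.le_norm _ (by omega) _ hle

theorem mem_basin_of_norm_compSeq_le {m : ℕ} {z : E} (hm : ‖compSeq f m z‖ ≤ 1) : z ∈ basin f := by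
  have hgeom : Tendsto (fun n => b ^ n * ‖compSeq f m z‖) atTop (𝓝 0) := by
    simpa using (tendsto_pow_atTop_nhds_zero_of_lt_one S.nonneg S.lt_one).mul_const _
  have hlim : Tendsto (fun n => compSeq f (n + m) z) atTop (𝓝 0) :=
    squeeze_zero_norm (fun n => by
      rw [compSeq_add, comp_apply]; exact (S.shift m).norm_compSeq_le hm n) hgeom
  exact (tendsto_add_atTop_iff_nat m).mp hlim

theorem norm_fderiv_le {n : ℕ} (hn : 1 ≤ n) : ‖fderiv ℂ (f n) 0‖ ≤ b := by
  refine ((S.isBiholomorphism n hn).1 0).hasFDerivAt.le_of_lip' S.nonneg ?_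
  filter_upwards [closedBall_mem_nhds (0 : E) one_pos] with z hz
  simpa [S.map_zero hn] using S.norm_le n hn z (mem_closedBall_zero_iff.mp hz)

theorem norm_sub_fderiv_le {n : ℕ} (hn : 1 ≤ n) {z : E} (hz : ‖z‖ ≤ 1) :
    ‖f n z - fderiv ℂ (f n) 0 z‖ ≤ 2 * ‖z‖ ^ 2 := by
  have hlin : ∀ w : E, ‖w‖ ≤ 1 → ‖f n w - fderiv ℂ (f n) 0 w‖ ≤ 2 * ‖w‖ := fun w hw =>
    calc ‖f n w - fderiv ℂ (f n) 0 w‖ ≤ b * ‖w‖ + b * ‖w‖ :=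
          (norm_sub_le _ _).trans (add_le_add (S.norm_le n hn w hw)
            ((ContinuousLinearMap.le_opNorm _ w).trans (by gcongr; exact S.norm_fderiv_le hn)))
      _ ≤ 2 * ‖w‖ := by nlinarith [S.lt_one, norm_nonneg w]
  rcases hz.lt_or_eq with hz | hz
  · simpa using norm_sub_fderiv_le_mul_sq (M := 2) (S.isBiholomorphism n hn).1.differentiableOn
      (S.map_zero hn) (fun w hw => by
        simpa using (hlin w (mem_ball_zero_iff.mp hw).le).trans (by
          linarith [mem_ball_zero_iff.mp hw])) (mem_ball_zero_iff.mpr hz)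
  · simpa [hz] using hlin z hz.le

theorem norm_fderiv_compSeq_le (n : ℕ) : ‖fderiv ℂ (compSeq f n) 0‖ ≤ b ^ n := by
  refine ((S.isBiholomorphism_compSeq n).1 0).hasFDerivAt.le_of_lip' (pow_nonneg S.nonneg n) ?_
  filter_upwards [closedBall_mem_nhds (0 : E) one_pos] with z hz
  simpa [S.compSeq_zero] using S.norm_compSeq_le (mem_closedBall_zero_iff.mp hz) n

/-- By the chain rule this is `Λ n ∘ ⋯ ∘ Λ 1`, where `Λ j = fderiv ℂ (f j) 0`. -/
def linearPart (n : ℕ) : E ≃L[ℂ] E :=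
  (S.isBiholomorphism_compSeq n).fderivEquiv 0

theorem linearPart_apply (n : ℕ) (v : E) : S.linearPart n v = fderiv ℂ (compSeq f n) 0 v :=
  rfl

theorem norm_linearPart_le (n : ℕ) (v : E) : ‖S.linearPart n v‖ ≤ b ^ n * ‖v‖ :=
  (ContinuousLinearMap.le_opNorm _ v).trans (by gcongr; exact S.norm_fderiv_compSeq_le n)

theorem exists_norm_linearPart_lt (ζ : E) {ε : ℝ} (hε : 0 < ε) :
    ∃ m, ‖S.linearPart m ζ‖ < ε := by
  have hlim : Tendsto (fun m => b ^ m * ‖ζ‖) atTop (𝓝 0) := by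
    simpa using (tendsto_pow_atTop_nhds_zero_of_lt_one S.nonneg S.lt_one).mul_const ‖ζ‖
  exact ((hlim.eventually (gt_mem_nhds hε)).exists).imp fun m hm =>
    (S.norm_linearPart_le m ζ).trans_lt hm

theorem le_norm_linearPart (n : ℕ) (v : E) : a ^ n * ‖v‖ ≤ ‖S.linearPart n v‖ := by
  refine ((S.isBiholomorphism_compSeq n).1 0).hasFDerivAt.mul_norm_le_norm_apply
    (S.compSeq_zero n) ?_ v
  filter_upwards [closedBall_mem_nhds (0 : E) one_pos] with z hz
  exact S.le_norm_compSeq (mem_closedBall_zero_iff.mp hz) n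

theorem linearPart_zero_apply (v : E) : S.linearPart 0 v = v := by
  simp [linearPart_apply, compSeq]

theorem linearPart_succ_apply (n : ℕ) (v : E) :
    S.linearPart (n + 1) v = fderiv ℂ (f (n + 1)) 0 (S.linearPart n v) := by
  simp only [linearPart_apply, compSeq]
  rw [fderiv_comp 0 (S.compSeq_zero n ▸ (S.isBiholomorphism _ (by omega)).1 _)
    ((S.isBiholomorphism_compSeq n).1 0), S.compSeq_zero]
  rfl

theorem linearPart_add_apply (m n : ℕ) (v : E) :
    S.linearPart (n + m) v = (S.shift m).linearPart n (S.linearPart m v) := by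
  simp only [linearPart_apply, compSeq_add]
  rw [fderiv_comp 0 (S.compSeq_zero m ▸ ((S.shift m).isBiholomorphism_compSeq n).1 _)
    ((S.isBiholomorphism_compSeq m).1 0), S.compSeq_zero]
  rfl

def approx (n : ℕ) (z : E) : E :=
  (S.linearPart n).symm (compSeq f n z)

theorem differentiable_approx (n : ℕ) : Differentiable ℂ (S.approx n) :=
  (S.linearPart n).symm.differentiable.comp (S.isBiholomorphism_compSeq n).1

theorem approx_zero (z : E) : S.approx 0 z = z :=
  (S.linearPart 0).symm_apply_eq.mpr (S.linearPart_zero_apply z).symm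

theorem approx_add (m n : ℕ) (z : E) :
    S.approx (n + m) z = (S.linearPart m).symm ((S.shift m).approx n (compSeq f m z)) := by
  rw [approx, ContinuousLinearEquiv.symm_apply_eq, linearPart_add_apply,
    ContinuousLinearEquiv.apply_symm_apply, approx, ContinuousLinearEquiv.apply_symm_apply,
    compSeq_add, comp_apply]

theorem norm_approx_succ_sub_le {z : E} (hz : ‖z‖ ≤ 1) (n : ℕ) :
    ‖S.approx (n + 1) z - S.approx n z‖ ≤ 2 / a * ‖z‖ ^ 2 * (b ^ 2 / a) ^ n := by
  set x := S.approx (n + 1) z - S.approx n z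
  have hx : S.linearPart (n + 1) x =
      f (n + 1) (compSeq f n z) - fderiv ℂ (f (n + 1)) 0 (compSeq f n z) := by
    simp only [x, approx, map_sub, ContinuousLinearEquiv.apply_symm_apply, linearPart_succ_apply]
    rfl
  have ha := S.pos
  have hbound : a ^ (n + 1) * ‖x‖ ≤ 2 * (b ^ n * ‖z‖) ^ 2 :=
    calc a ^ (n + 1) * ‖x‖ ≤ ‖S.linearPart (n + 1) x‖ := S.le_norm_linearPart _ x
      _ ≤ 2 * ‖compSeq f n z‖ ^ 2 := hx ▸ S.norm_sub_fderiv_le (by omega)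
          ((S.norm_compSeq_le hz n).trans
            (mul_le_one₀ (pow_le_one₀ S.nonneg S.lt_one.le) (norm_nonneg z) hz))
      _ ≤ 2 * (b ^ n * ‖z‖) ^ 2 := by gcongr; exact S.norm_compSeq_le hz n
  calc ‖x‖ ≤ 2 * (b ^ n * ‖z‖) ^ 2 / a ^ (n + 1) := by
        rw [le_div_iff₀ (by positivity)]; linarith
    _ = 2 / a * ‖z‖ ^ 2 * (b ^ 2 / a) ^ n := by rw [div_pow]; field_simp; ring

theorem ratio_lt_one : b ^ 2 / a < 1 :=
  (div_lt_one S.pos).mpr S.sq_lt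

theorem squeezeRadius_pos : 0 < squeezeRadius a b :=
  lt_min (by norm_num) (by linarith [S.sq_lt])

theorem cauchySeq_approx {z : E} (hz : ‖z‖ ≤ 1) : CauchySeq fun n => S.approx n z :=
  cauchySeq_of_le_geometric _ _ S.ratio_lt_one fun n => by
    rw [dist_comm, dist_eq_norm]; exact S.norm_approx_succ_sub_le hz n

variable [CompleteSpace E]

/-- The limit exists on the closed unit ball (`tendsto_approx`) and on the basin
(`conj_eq_linearPart_symm`); elsewhere `limUnder` returns a junk value. -/
def conj (z : E) : E :=
  limUnder atTop fun n => S.approx n z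

theorem tendsto_approx {z : E} (hz : ‖z‖ ≤ 1) :
    Tendsto (fun n => S.approx n z) atTop (𝓝 (S.conj z)) :=
  (S.cauchySeq_approx hz).tendsto_limUnder

theorem norm_conj_sub_approx_le {z : E} (hz : ‖z‖ ≤ 1) (n : ℕ) :
    ‖S.conj z - S.approx n z‖ ≤ 2 / (a - b ^ 2) * ‖z‖ ^ 2 * (b ^ 2 / a) ^ n := by
  have h := dist_le_of_le_geometric_of_tendsto _ _ S.ratio_lt_one
    (fun n => by rw [dist_comm, dist_eq_norm]; exact S.norm_approx_succ_sub_le hz n)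
    (S.tendsto_approx hz) n
  rw [dist_comm, dist_eq_norm] at h
  have ha := S.pos
  have hab : 0 < a - b ^ 2 := sub_pos.mpr S.sq_lt
  convert h using 1
  field_simp

theorem norm_conj_sub_self_le {z : E} (hz : ‖z‖ ≤ 1) :
    ‖S.conj z - z‖ ≤ 2 / (a - b ^ 2) * ‖z‖ ^ 2 := by
  simpa [approx_zero] using S.norm_conj_sub_approx_le hz 0

theorem conj_zero : S.conj 0 = 0 := by
  simpa [sub_eq_zero] using S.norm_conj_sub_self_le (z := 0) (by simp)

theorem tendstoUniformlyOn_approx : TendstoUniformlyOn S.approx S.conj atTop (ball 0 1) := by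
  rw [Metric.tendstoUniformlyOn_iff]
  intro ε hε
  have hlim : Tendsto (fun n => 2 / (a - b ^ 2) * (b ^ 2 / a) ^ n) atTop (𝓝 0) := by
    simpa using (tendsto_pow_atTop_nhds_zero_of_lt_one
      (div_nonneg (sq_nonneg b) S.pos.le) S.ratio_lt_one).const_mul (2 / (a - b ^ 2))
  have hab : 0 < a - b ^ 2 := sub_pos.mpr S.sq_lt
  filter_upwards [hlim.eventually (gt_mem_nhds hε)] with n hn z hz
  have hz1 : ‖z‖ < 1 := mem_ball_zero_iff.mp hz
  rw [dist_eq_norm]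
  calc ‖S.conj z - S.approx n z‖ ≤ 2 / (a - b ^ 2) * ‖z‖ ^ 2 * (b ^ 2 / a) ^ n :=
        S.norm_conj_sub_approx_le hz1.le n
    _ ≤ 2 / (a - b ^ 2) * 1 * (b ^ 2 / a) ^ n := by
        gcongr
        · have := S.pos; positivity
        · exact pow_le_one₀ (norm_nonneg z) hz1.le
    _ < ε := by simpa using hn

theorem differentiableOn_conj : DifferentiableOn ℂ S.conj (ball 0 1) :=
  differentiableOn_of_tendstoUniformlyOn isOpen_ball
    (fun n => (S.differentiable_approx n).differentiableOn) S.tendstoUniformlyOn_approx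

theorem conj_eq_linearPart_symm {m : ℕ} {z : E} (hm : ‖compSeq f m z‖ ≤ 1) :
    S.conj z = (S.linearPart m).symm ((S.shift m).conj (compSeq f m z)) := by
  refine Tendsto.limUnder_eq ((tendsto_add_atTop_iff_nat m).mp ?_)
  simpa only [approx_add, comp_def] using
    ((S.linearPart m).symm.continuous.tendsto _).comp ((S.shift m).tendsto_approx hm)

theorem differentiableAt_conj {z : E} (hz : ‖z‖ < 1) : DifferentiableAt ℂ S.conj z :=
  S.differentiableOn_conj.differentiableAt (isOpen_ball.mem_nhds (mem_ball_zero_iff.mpr hz))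

theorem norm_fderiv_conj_sub_id_le {z : E} (hz : z ∈ ball (0 : E) (squeezeRadius a b)) :
    ‖fderiv ℂ S.conj z - ContinuousLinearMap.id ℂ E‖ ≤ 1 / 4 := by
  set r := squeezeRadius a b
  have hr := S.squeezeRadius_pos
  have hab : 0 < a - b ^ 2 := sub_pos.mpr S.sq_lt
  have hz' : ‖z‖ < r := mem_ball_zero_iff.mp hz
  have hnorm : ∀ y ∈ ball z r, ‖y‖ < 2 * r := fun y hy => by
    linarith [norm_le_norm_add_norm_sub' y z, mem_ball_iff_norm.mp hy]
  have hr2 : r ≤ 1 / 2 := min_le_left _ _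
  have hsub : ball z r ⊆ ball 0 1 := fun y hy => mem_ball_zero_iff.mpr
    (by linarith [hnorm y hy])
  have hM : ∀ y ∈ ball z r, ‖S.conj y - y‖ ≤ 2 / (a - b ^ 2) * (2 * r) ^ 2 := fun y hy =>
    (S.norm_conj_sub_self_le (mem_ball_zero_iff.mp (hsub hy)).le).trans
      (by gcongr; exact (hnorm y hy).le)
  have h := norm_fderiv_le_of_forall_norm_le
    ((S.differentiableOn_conj.mono hsub).sub differentiableOn_id) hr hM
  rw [fderiv_sub (S.differentiableAt_conj (norm_lt_one_of_mem_ball_squeezeRadius hz))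
    differentiableAt_id, fderiv_id] at h
  have hr64 : r ≤ (a - b ^ 2) / 64 := min_le_right _ _
  calc _ ≤ 2 * (2 / (a - b ^ 2) * (2 * r) ^ 2) / r := h
    _ = 16 * r / (a - b ^ 2) := by field_simp; ring
    _ ≤ 1 / 4 := by rw [div_le_iff₀ hab]; linarith

theorem approximatesLinearOn_conj : ApproximatesLinearOn S.conj
    ((ContinuousLinearEquiv.refl ℂ E : E ≃L[ℂ] E) : E →L[ℂ] E) (ball 0 (squeezeRadius a b))
    (1 / 4) := by
  intro x hx y hy
  have hdiff : ∀ w ∈ ball (0 : E) (squeezeRadius a b), DifferentiableAt ℂ S.conj w := fun w hw =>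
    S.differentiableAt_conj (norm_lt_one_of_mem_ball_squeezeRadius hw)
  have h := (convex_ball (0 : E) _).norm_image_sub_le_of_norm_fderiv_le (f := S.conj - id)
    (fun w hw => (hdiff w hw).sub differentiableAt_id) (fun w hw => by
      rw [fderiv_sub (hdiff w hw) differentiableAt_id, fderiv_id]
      exact S.norm_fderiv_conj_sub_id_le hw) hy hx
  calc ‖S.conj x - S.conj y - (ContinuousLinearEquiv.refl ℂ E) (x - y)‖
      = ‖(S.conj x - x) - (S.conj y - y)‖ := by rw [ContinuousLinearEquiv.refl_apply]; abel_nf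
    _ ≤ 1 / 4 * ‖x - y‖ := h
    _ = _ := by norm_num

def conjHomeomorph : OpenPartialHomeomorph E E :=
  S.approximatesLinearOn_conj.toOpenPartialHomeomorph S.conj _ (by
    rcases subsingleton_or_nontrivial E with h | h
    · exact .inl h
    · right
      rw [ContinuousLinearEquiv.refl_symm, ContinuousLinearEquiv.coe_refl,
        ContinuousLinearMap.nnnorm_id, inv_one]
      norm_num) isOpen_ball

theorem conjHomeomorph_apply (z : E) : S.conjHomeomorph z = S.conj z :=
  rfl

theorem closedBall_subset_conjHomeomorph_target :
    closedBall 0 (squeezeRadius a b / 4) ⊆ S.conjHomeomorph.target := by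
  have hr := S.squeezeRadius_pos
  have hsurj := S.approximatesLinearOn_conj.surjOn_closedBall_of_nonlinearRightInverse
    ⟨id, 1, by simp, fun _ => rfl⟩ (b := 0) (ε := squeezeRadius a b / 2) (by positivity)
    (closedBall_subset_ball (by linarith))
  rw [S.conj_zero] at hsurj
  refine (hsurj.mono (closedBall_subset_ball (by linarith)) (closedBall_subset_closedBall ?_))
  norm_num
  linarith

theorem differentiableOn_conj_basin : DifferentiableOn ℂ S.conj (basin f) := by
  intro z hz
  obtain ⟨m, hm⟩ := (hz.eventually (ball_mem_nhds 0 one_pos)).exists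
  have hm' : ‖compSeq f m z‖ < 1 := mem_ball_zero_iff.mp hm
  have hcont := (S.isBiholomorphism_compSeq m).1.continuous
  have heq : (fun w => (S.linearPart m).symm ((S.shift m).conj (compSeq f m w))) =ᶠ[𝓝 z]
      S.conj := by
    filter_upwards [(hcont.norm.continuousAt.eventually_lt continuousAt_const hm')] with w hw
    exact (S.conj_eq_linearPart_symm hw.le).symm
  refine (heq.differentiableAt_iff.mp ?_).differentiableWithinAt
  exact (S.linearPart m).symm.differentiableAt.comp z
    (((S.shift m).differentiableAt_conj hm').comp z ((S.isBiholomorphism_compSeq m).1 z))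

theorem injOn_conj_basin : InjOn S.conj (basin f) := by
  intro z hz w hw h
  have hr := S.squeezeRadius_pos
  obtain ⟨m, hzm, hwm⟩ := ((hz.eventually (ball_mem_nhds 0 hr)).and
    (hw.eventually (ball_mem_nhds 0 hr))).exists
  rw [S.conj_eq_linearPart_symm (norm_lt_one_of_mem_ball_squeezeRadius hzm).le,
    S.conj_eq_linearPart_symm (norm_lt_one_of_mem_ball_squeezeRadius hwm).le] at h
  obtain ⟨-, g, -, hg, -⟩ := S.isBiholomorphism_compSeq m
  exact hg.injective ((S.shift m).conjHomeomorph.injOn hzm hwm ((S.linearPart m).symm.injective h))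

theorem differentiableAt_conjHomeomorph_symm {p : E} (hp : p ∈ S.conjHomeomorph.target) :
    DifferentiableAt ℂ S.conjHomeomorph.symm p := by
  have hsrc := S.conjHomeomorph.map_target hp
  obtain ⟨e, he⟩ := exists_continuousLinearEquiv_of_norm_sub_id_lt_one
    ((S.norm_fderiv_conj_sub_id_le hsrc).trans_lt (by norm_num))
  have hderiv : HasFDerivAt S.conjHomeomorph (e : E →L[ℂ] E) (S.conjHomeomorph.symm p) :=
    he ▸ (S.differentiableAt_conj (norm_lt_one_of_mem_ball_squeezeRadius hsrc)).hasFDerivAt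
  exact (S.conjHomeomorph.hasFDerivAt_symm hp hderiv).differentiableAt

theorem exists_local_inverse (ζ : E) : ∃ σ : E → E,
    DifferentiableAt ℂ σ ζ ∧ ∀ᶠ w in 𝓝 ζ, σ w ∈ basin f ∧ S.conj (σ w) = w := by
  obtain ⟨m, hm⟩ := S.exists_norm_linearPart_lt ζ (ε := squeezeRadius a b / 4)
    (by linarith [S.squeezeRadius_pos])
  set φ := (S.shift m).conjHomeomorph
  obtain ⟨-, g, hgd, -, hgr⟩ := S.isBiholomorphism_compSeq m
  have htarget : ∀ w, ‖S.linearPart m w‖ < squeezeRadius a b / 4 → S.linearPart m w ∈ φ.target :=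
    fun w hw => (S.shift m).closedBall_subset_conjHomeomorph_target
      (mem_closedBall_zero_iff.mpr hw.le)
  refine ⟨g ∘ φ.symm ∘ S.linearPart m, (hgd _).comp ζ
    (((S.shift m).differentiableAt_conjHomeomorph_symm (htarget ζ hm)).comp ζ
      (S.linearPart m).differentiableAt), ?_⟩
  filter_upwards [(S.linearPart m).continuous.norm.continuousAt.eventually_lt
    continuousAt_const hm] with w hw
  have hle : ‖compSeq f m (g (φ.symm (S.linearPart m w)))‖ ≤ 1 := by
    rw [hgr]
    exact (norm_lt_one_of_mem_ball_squeezeRadius (φ.map_target (htarget w hw))).le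
  refine ⟨S.mem_basin_of_norm_compSeq_le hle, ?_⟩
  rw [comp_apply, comp_apply, S.conj_eq_linearPart_symm hle, hgr,
    ← (S.shift m).conjHomeomorph_apply, φ.right_inv (htarget w hw),
    ContinuousLinearEquiv.symm_apply_apply]

end IsSqueezing

end Squeezing

theorem seqComp_eq_compSeq {k : ℕ} (f : ℕ → Ek k → Ek k) (n : ℕ) : seqComp f n = compSeq f n := by
  induction n with
  | zero => rfl
  | succ n ih => rw [seqComp, compSeq, ih]

theorem basin_biholomorphic_of_squeezed_general (k : ℕ)
    (f : ℕ → Ek k → Ek k) (hf : ∀ n, 1 ≤ n → IsAutomorphismOf (f n))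
    (a b : ℝ) (ha : 0 < a) (hab : a < b) (hb1 : b < 1) (hba : b ^ 2 < a)
    (hbound : ∀ n, 1 ≤ n → ∀ z : Ek k, ‖z‖ ≤ 1 →
      a * ‖z‖ ≤ ‖f n z‖ ∧ ‖f n z‖ ≤ b * ‖z‖) :
    BiholToCk {z : Ek k | Tendsto (fun n => seqComp f n z) atTop (nhds 0)} := by
  have S : IsSqueezing f a b :=
    ⟨ha, (ha.trans hab).le, hb1, hba, hf, fun n hn z hz => (hbound n hn z hz).1,
      fun n hn z hz => (hbound n hn z hz).2⟩
  obtain ⟨G, hG, hGH, hHG⟩ :=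
    exists_differentiable_inverse_of_injOn S.injOn_conj_basin S.exists_local_inverse
  simp only [seqComp_eq_compSeq]
  exact ⟨S.conj, G, S.differentiableOn_conj_basin, hG, hGH, hHG⟩

/-- if `0 < a < b < 1`, `b² < a`, and every `f_n` satisfies
`a‖z‖ ≤ ‖f_n(z)‖ ≤ b‖z‖` on the closed unit ball, then the basin of attraction
`Ω* = {z : f_n ∘ ⋯ ∘ f_1 (z) → 0}` is biholomorphic to `ℂ^k`. -/
theorem basin_biholomorphic_of_squeezed (k : ℕ) (hk : 2 ≤ k)
    (f : ℕ → Ek k → Ek k) (hf : ∀ n, 1 ≤ n → IsAutomorphismOf (f n))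
    (a b : ℝ) (ha : 0 < a) (hab : a < b) (hb1 : b < 1) (hba : b ^ 2 < a)
    (hbound : ∀ n, 1 ≤ n → ∀ z : Ek k, ‖z‖ ≤ 1 →
      a * ‖z‖ ≤ ‖f n z‖ ∧ ‖f n z‖ ≤ b * ‖z‖) :
    BiholToCk {z : Ek k | Tendsto (fun n => seqComp f n z) atTop (nhds 0)} :=
  basin_biholomorphic_of_squeezed_general k f hf a b ha hab hb1 hba hbound

end
end

section
/- Let k ≥ 2 and let Ω ⊊ ℂ^k be a nonempty proper open subset that is biholomorphic to ℂ^k and is Runge, in the sense that every holomorphic function on Ω is the limit, uniformly on every compact subset of Ω, of polynomials ℂ^k → ℂ. Then for every p ∈ ∂Ω and every ε > 0, the Hausdorff dimension of ∂Ω ∩ B(p, ε) is at least 2k − 1. -/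
open Filter Metric Set MeasureTheory
open scoped ENNReal

noncomputable section

instance {k : ℕ} : MeasurableSpace (Ek k) := borel _
instance {k : ℕ} : BorelSpace (Ek k) := ⟨rfl⟩

/-- `Ω` is Runge: every function holomorphic on `Ω` can be approximated uniformly on
compact subsets of `Ω` by polynomials. -/
def IsRunge {k : ℕ} (Ω : Set (Ek k)) : Prop :=
  ∀ f : Ek k → ℂ, DifferentiableOn ℂ f Ω →
    ∀ K : Set (Ek k), K ⊆ Ω → IsCompact K → ∀ ε : ℝ, 0 < ε →
      ∃ q : MvPolynomial (Fin k) ℂ,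
        ∀ z ∈ K, ‖f z - MvPolynomial.eval (fun i => z i) q‖ < ε

open Topology Bornology Module MeasureTheory.Measure
open scoped NNReal

/-!
Suppose `dimH (∂Ω ∩ B(p, ε)) < 2k - 1`. Since `dimH ([a, b] × E) ≤ dimH E + 1`, sweeping that set
along a smooth one-parameter family of translations, or of rotations about `p`, produces a set of
dimension `< 2k`, so a generic small segment, or circle centred at `p`, misses `∂Ω` near `p`.
Segments show that `Ω` is dense near `p`, as a segment from `Ω` to the exterior of `Ω` crosses
`∂Ω`; hence a small circle `ζ ↦ p + ζ v`, `|ζ| = 1`, lies in `Ω`. Since `Ω` is Runge, the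
biholomorphism `H : Ω → ℂ^k` is a uniform limit of polynomial maps on this circle. By the maximum
principle these converge on the whole disc to a holomorphic `Φ` with `Φ = H` on the circle, and
`H⁻¹ ∘ Φ` is a disc in `Ω` with the same boundary values as `ζ ↦ p + ζ v`, hence equal to it.
So `p ∈ Ω`, which contradicts `p ∈ ∂Ω`.
-/

theorem IsPreconnected.inter_frontier_nonempty {α : Type*} [TopologicalSpace α] {C U : Set α}
    (hC : IsPreconnected C) (hCU : (C ∩ U).Nonempty) (hCU' : (C \ U).Nonempty) :
    (C ∩ frontier U).Nonempty := by
  by_contra h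
  rw [not_nonempty_iff_eq_empty, ← disjoint_iff_inter_eq_empty] at h
  have hcov : C ⊆ interior U ∪ (closure U)ᶜ := fun x hx => by
    by_cases hxU : x ∈ closure U
    · exact .inl (by_contra fun hi => Set.disjoint_left.1 h hx ⟨hxU, hi⟩)
    · exact .inr hxU
  obtain ⟨x, hx, hxi, hxc⟩ := hC _ _ isOpen_interior isClosed_closure.isOpen_compl hcov
    (hCU.imp fun x hx => ⟨hx.1, (hcov hx.1).resolve_right (not_not.2 (subset_closure hx.2))⟩)
    (hCU'.imp fun x hx => ⟨hx.1, (hcov hx.1).resolve_left fun hi => hx.2 (interior_subset hi)⟩)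
  exact hxc (interior_subset_closure hxi)

section HausdorffProduct

variable {X : Type*} [EMetricSpace X]

theorem ediam_prod_le {Y : Type*} [EMetricSpace Y] (s : Set X) (t : Set Y) :
    ediam (s ×ˢ t) ≤ max (ediam s) (ediam t) :=
  ediam_le fun _ hx _ hy => max_le_max (edist_le_ediam_of_mem hx.1 hy.1)
    (edist_le_ediam_of_mem hx.2 hy.2)

theorem Icc_subset_iUnion_Icc_add {a b s : ℝ} (hs : 0 < s) :
    Icc a b ⊆ ⋃ m : Fin (⌊(b - a) / s⌋₊ + 1), Icc (a + m * s) (a + m * s + s) := by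
  intro x hx
  have hxa : 0 ≤ (x - a) / s := div_nonneg (by linarith [hx.1]) hs.le
  have hm : ⌊(x - a) / s⌋₊ < ⌊(b - a) / s⌋₊ + 1 :=
    Nat.lt_succ_of_le (Nat.floor_le_floor (by gcongr; exact hx.2))
  refine mem_iUnion.2 ⟨⟨_, hm⟩, ?_, ?_⟩
  · have := Nat.floor_le hxa
    rw [le_div_iff₀ hs] at this
    simp only
    linarith
  · have := Nat.lt_floor_add_one ((x - a) / s)
    rw [div_lt_iff₀ hs] at this
    simp only
    linarith

theorem exists_finite_cover_Icc_prod {d : ℝ} (hd : 0 ≤ d) {a b s : ℝ} (hab : a ≤ b) (hs : 0 < s)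
    {t : Set X} (ht : ediam t ≤ ENNReal.ofReal s) :
    ∃ (N : ℕ) (P : Fin N → Set (ℝ × X)), Icc a b ×ˢ t ⊆ ⋃ m, P m ∧
      (∀ m, ediam (P m) ≤ ENNReal.ofReal s) ∧
      ∑ m, ediam (P m) ^ (d + 1) ≤ ENNReal.ofReal (b - a + s) * ENNReal.ofReal s ^ d := by
  set N := ⌊(b - a) / s⌋₊ + 1
  have hdiam : ∀ m : Fin N,
      ediam (Icc (a + m * s) (a + m * s + s) ×ˢ t) ≤ ENNReal.ofReal s := fun m =>
    (ediam_prod_le _ _).trans (max_le (by rw [Real.ediam_Icc]; ring_nf; rfl) ht)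
  refine ⟨N, fun m => Icc (a + m * s) (a + m * s + s) ×ˢ t, fun x hx => ?_, hdiam, ?_⟩
  · obtain ⟨m, hm⟩ := mem_iUnion.1 (Icc_subset_iUnion_Icc_add hs hx.1)
    exact mem_iUnion.2 ⟨m, hm, hx.2⟩
  have hNs : (N : ℝ) * s ≤ b - a + s := by
    have := Nat.floor_le (div_nonneg (sub_nonneg.2 hab) hs.le)
    rw [le_div_iff₀ hs] at this
    push_cast [N]
    linarith
  calc ∑ m : Fin N, ediam (Icc (a + m * s) (a + m * s + s) ×ˢ t) ^ (d + 1)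
      ≤ ∑ _m : Fin N, ENNReal.ofReal s ^ (d + 1) :=
        Finset.sum_le_sum fun m _ => ENNReal.rpow_le_rpow (hdiam m) (by linarith)
    _ = ENNReal.ofReal (N * s) * ENNReal.ofReal s ^ d := by
        rw [Finset.sum_const, Finset.card_univ, Fintype.card_fin, nsmul_eq_mul,
          ENNReal.rpow_add _ _ (by simpa using hs) ENNReal.ofReal_ne_top, ENNReal.rpow_one,
          ENNReal.ofReal_mul (by positivity), ENNReal.ofReal_natCast]
        ring
    _ ≤ ENNReal.ofReal (b - a + s) * ENNReal.ofReal s ^ d := by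
        gcongr

theorem exists_ediam_le_ofReal_of_ediam_le {d : ℝ} (hd : 0 < d) {t : Set X} {θ c : ℝ}
    (hθ : 0 < θ) (ht : ediam t ≤ ENNReal.ofReal θ) (hc : 0 < c) :
    ∃ s ∈ Ioc 0 θ, ediam t ≤ ENNReal.ofReal s ∧
      ENNReal.ofReal s ^ d ≤ ediam t ^ d + ENNReal.ofReal c := by
  set η := min θ (c ^ d⁻¹)
  have hη : 0 < η := lt_min hθ (by positivity)
  have hηd : ENNReal.ofReal η ^ d ≤ ENNReal.ofReal c := by
    rw [ENNReal.ofReal_rpow_of_nonneg hη.le hd.le]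
    refine ENNReal.ofReal_le_ofReal ?_
    calc η ^ d ≤ (c ^ d⁻¹) ^ d := Real.rpow_le_rpow hη.le (min_le_right _ _) hd.le
      _ = c := Real.rpow_inv_rpow hc.le hd.ne'
  have htop : ediam t ≠ ∞ := ne_top_of_le_ne_top ENNReal.ofReal_ne_top ht
  refine ⟨max (ediam t).toReal η, ⟨hη.trans_le (le_max_right _ _),
    max_le (ENNReal.toReal_le_of_le_ofReal hθ.le ht) (min_le_left _ _)⟩, ?_, ?_⟩ <;>
    rw [ENNReal.ofReal_max, ENNReal.ofReal_toReal htop]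
  · exact le_max_left _ _
  rcases le_total (ediam t) (ENNReal.ofReal η) with h | h
  · rw [max_eq_right h]; exact le_add_left hηd
  · rw [max_eq_left h]; exact le_self_add

variable [MeasurableSpace X] [BorelSpace X]

theorem hausdorffMeasure_eq_zero_of_forall_cover {d : ℝ} {s : Set X} (C : ℝ)
    (h : ∀ r : ℝ, 0 < r → r ≤ 1 → ∃ (ι : Type) (_ : Countable ι) (t : ι → Set X),
      s ⊆ ⋃ i, t i ∧ (∀ i, ediam (t i) ≤ ENNReal.ofReal r) ∧
        ∑' i, ediam (t i) ^ d ≤ ENNReal.ofReal (C * r)) :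
    μH[d] s = 0 := by
  choose ι _ t hcov hdiam hsum using fun j : ℕ =>
    h (1 / (j + 1)) Nat.one_div_pos_of_nat (div_le_one_of_le₀ (by simp) (by positivity))
  have hr : Tendsto (fun j : ℕ => (1 / (j + 1) : ℝ)) atTop (𝓝 0) :=
    tendsto_one_div_add_atTop_nhds_zero_nat
  refine le_antisymm ?_ zero_le
  calc μH[d] s ≤ liminf (fun j => ∑' i, ediam (t j i) ^ d) atTop :=
        hausdorffMeasure_le_liminf_tsum d s _ (ENNReal.tendsto_ofReal hr |>.trans (by simp))
          t (.of_forall hdiam) (.of_forall hcov)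
    _ ≤ liminf (fun j : ℕ => ENNReal.ofReal (C * (1 / (j + 1)))) atTop :=
        liminf_le_liminf (.of_forall hsum)
    _ = 0 := by
        simpa using (ENNReal.tendsto_ofReal (hr.const_mul C)).liminf_eq

theorem exists_cover_of_hausdorffMeasure_eq_zero {d : ℝ} (hd : 0 < d) {s : Set X}
    (h : μH[d] s = 0) {r c : ℝ≥0∞} (hr : 0 < r) (hc : 0 < c) :
    ∃ t : ℕ → Set X, s ⊆ ⋃ n, t n ∧ (∀ n, ediam (t n) ≤ r) ∧ ∑' n, ediam (t n) ^ d < c := by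
  have hlt : (⨅ (t : ℕ → Set X) (_ : s ⊆ ⋃ n, t n) (_ : ∀ n, ediam (t n) ≤ r),
      ∑' n, ⨆ _ : (t n).Nonempty, ediam (t n) ^ d) < c := by
    refine lt_of_le_of_lt ?_ (h ▸ hc)
    rw [hausdorffMeasure_apply]
    exact le_iSup₂ (f := fun r (_ : 0 < r) => ⨅ (t : ℕ → Set X) (_ : s ⊆ ⋃ n, t n)
      (_ : ∀ n, ediam (t n) ≤ r), ∑' n, ⨆ _ : (t n).Nonempty, ediam (t n) ^ d) r hr
  simp only [iInf_lt_iff] at hlt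
  obtain ⟨t, hcov, hdiam, hsum⟩ := hlt
  refine ⟨t, hcov, hdiam, lt_of_le_of_lt (ENNReal.tsum_le_tsum fun n => ?_) hsum⟩
  rcases (t n).eq_empty_or_nonempty with hn | hn
  · simp [hn, ENNReal.zero_rpow_of_pos hd]
  · exact le_iSup_of_le hn le_rfl

theorem hausdorffMeasure_Icc_prod_eq_zero [MeasurableSpace (ℝ × X)] [BorelSpace (ℝ × X)]
    {d : ℝ} (hd : 0 < d) {E : Set X} (hE : μH[d] E = 0) (a b : ℝ) :
    μH[d + 1] (Icc a b ×ˢ E) = 0 := by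
  rcases lt_or_ge b a with hba | hab
  · simp [Icc_eq_empty hba.not_ge]
  refine hausdorffMeasure_eq_zero_of_forall_cover (2 * (b - a + 1)) fun θ hθ hθ1 => ?_
  obtain ⟨t, hEt, htθ, htsum⟩ := exists_cover_of_hausdorffMeasure_eq_zero hd hE
    (ENNReal.ofReal_pos.2 hθ) (ENNReal.ofReal_pos.2 hθ)
  -- slabs need a positive width, so the diameters are padded, at a total cost of `θ`
  choose s hs hts hsd using fun n => exists_ediam_le_ofReal_of_ediam_le hd hθ (htθ n)
    (by positivity : 0 < θ / 2 ^ (n + 1))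
  choose N P hcov hdiam hsum using fun n =>
    exists_finite_cover_Icc_prod hd.le hab (hs n).1 (hts n)
  refine ⟨Σ n, Fin (N n), inferInstance, fun i => P i.1 i.2, fun x hx => ?_, fun i => ?_, ?_⟩
  · obtain ⟨n, hn⟩ := mem_iUnion.1 (hEt hx.2)
    obtain ⟨m, hm⟩ := mem_iUnion.1 (hcov n ⟨hx.1, hn⟩)
    exact mem_iUnion.2 ⟨⟨n, m⟩, hm⟩
  · exact (hdiam i.1 i.2).trans (ENNReal.ofReal_le_ofReal (hs i.1).2)
  calc ∑' i : Σ n, Fin (N n), ediam (P i.1 i.2) ^ (d + 1)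
      = ∑' n, ∑ m, ediam (P n m) ^ (d + 1) := by
        rw [ENNReal.tsum_sigma']; simp_rw [tsum_fintype]
    _ ≤ ∑' n, ENNReal.ofReal (b - a + 1) *
          (ediam (t n) ^ d + ENNReal.ofReal (θ / 2 ^ (n + 1))) :=
        ENNReal.tsum_le_tsum fun n => (hsum n).trans (by
          gcongr
          · linarith [(hs n).2]
          · exact hsd n)
    _ ≤ ENNReal.ofReal (b - a + 1) * (ENNReal.ofReal θ + ENNReal.ofReal θ) := by
        rw [ENNReal.tsum_mul_left, ENNReal.tsum_add]
        gcongr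
        rw [← ENNReal.ofReal_tsum_of_nonneg (fun n => by positivity)]
        · simp_rw [pow_succ', ← div_div, tsum_geometric_two', le_refl]
        · simp_rw [pow_succ', ← div_div]
          exact summable_geometric_two' θ
    _ = ENNReal.ofReal (2 * (b - a + 1) * θ) := by
        rw [← ENNReal.ofReal_add hθ.le hθ.le, ← ENNReal.ofReal_mul (by linarith)]
        ring_nf

end HausdorffProduct

theorem dimH_Icc_prod_le {X : Type*} [EMetricSpace X] (a b : ℝ) (E : Set X) :
    dimH (Icc a b ×ˢ E) ≤ dimH E + 1 := by
  borelize X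
  let _ : MeasurableSpace (ℝ × X) := borel _
  have _ : BorelSpace (ℝ × X) := ⟨rfl⟩
  refine ENNReal.le_of_forall_pos_le_add fun ε hε hE => ?_
  have hfin : dimH E ≠ ∞ := ne_top_of_lt (lt_of_le_of_lt le_self_add hE)
  set d : ℝ≥0 := (dimH E).toNNReal + ε
  have hEd : dimH E < d := by
    rw [ENNReal.coe_add, ENNReal.coe_toNNReal hfin]
    exact ENNReal.lt_add_right hfin (by simpa using hε.ne')
  have h0 : μH[((d + 1 : ℝ≥0) : ℝ)] (Icc a b ×ˢ E) = 0 := by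
    simpa using hausdorffMeasure_Icc_prod_eq_zero (by positivity)
      (hausdorffMeasure_of_dimH_lt hEd) a b
  calc dimH (Icc a b ×ˢ E) ≤ ((d + 1 : ℝ≥0) : ℝ≥0∞) :=
        dimH_le_of_hausdorffMeasure_ne_top (h0 ▸ ENNReal.zero_ne_top)
    _ = dimH E + 1 + ε := by
        simp only [d, ENNReal.coe_add, ENNReal.coe_toNNReal hfin, ENNReal.coe_one]
        ring

section Avoidance

variable {F : Type*} [NormedAddCommGroup F] [NormedSpace ℝ F] [FiniteDimensional ℝ F] {S : Set F}

theorem dense_compl_image_Icc_prod {f : ℝ × F → F} (hf : ContDiff ℝ 1 f) (a b : ℝ)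
    (hS : dimH S + 1 < finrank ℝ F) : Dense (f '' (Icc a b ×ˢ S))ᶜ :=
  dense_compl_of_dimH_lt_finrank <|
    ((hf.contDiffOn.dimH_image_le convex_univ (subset_univ _)).trans
      (dimH_Icc_prod_le a b S)).trans_lt hS

theorem exists_disjoint_segment (hS : dimH S + 1 < finrank ℝ F) (v x : F) {δ : ℝ} (hδ : 0 < δ) :
    ∃ y ∈ ball x δ, Disjoint (segment ℝ y (y + v)) S := by
  obtain ⟨y, hyx, hy⟩ := (dense_compl_image_Icc_prod (f := fun p => p.2 - p.1 • v)
    (by fun_prop) 0 1 hS).inter_open_nonempty _ isOpen_ball ⟨x, mem_ball_self hδ⟩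
  refine ⟨y, hyx, Set.disjoint_left.2 ?_⟩
  rw [segment_eq_image', add_sub_cancel_left]
  rintro _ ⟨t, ht, rfl⟩ htS
  exact hy ⟨(t, y + t • v), ⟨ht, htS⟩, add_sub_cancel_right y _⟩

theorem ball_subset_closure_of_dimH_frontier_inter_ball_lt {Ω : Set F} (hΩ : IsOpen Ω)
    {p : F} (hp : p ∈ closure Ω) {ε : ℝ} (hS : dimH (frontier Ω ∩ ball p ε) + 1 < finrank ℝ F) :
    ball p (ε / 2) ⊆ closure Ω := by
  intro u hu
  by_contra huΩ
  have hε : 0 < ε := by linarith [pos_of_mem_ball hu]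
  obtain ⟨a, haΩ, hpa⟩ := Metric.mem_closure_iff.1 hp (ε / 4) (by positivity)
  obtain ⟨δ₁, hδ₁, hδ₁Ω⟩ := Metric.isOpen_iff.1 hΩ a haΩ
  obtain ⟨δ₂, hδ₂, hδ₂Ω⟩ := Metric.isOpen_iff.1 isClosed_closure.isOpen_compl u huΩ
  obtain ⟨y, hya, hyS⟩ := exists_disjoint_segment hS (u - a) a
    (lt_min (lt_min hδ₁ hδ₂) (by positivity : 0 < ε / 4))
  rw [mem_ball, lt_min_iff, lt_min_iff] at hya
  have hyu : dist (y + (u - a)) u = dist y a := by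
    rw [dist_eq_norm, dist_eq_norm]; congr 1; abel
  have hyΩ : y ∈ Ω := hδ₁Ω (mem_ball.2 hya.1.1)
  have hyuΩ : y + (u - a) ∉ Ω := fun h => hδ₂Ω (mem_ball.2 (hyu ▸ hya.1.2)) (subset_closure h)
  have hseg : segment ℝ y (y + (u - a)) ⊆ ball p ε := by
    refine (convex_ball p ε).segment_subset ?_ ?_ <;> rw [mem_ball] <;>
      linarith [dist_triangle y a p, dist_triangle (y + (u - a)) u p, dist_comm p a, mem_ball.1 hu]
  obtain ⟨z, hz, hzΩ⟩ := (convex_segment _ _).isPreconnected.inter_frontier_nonempty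
    ⟨y, left_mem_segment _ _ _, hyΩ⟩ ⟨_, right_mem_segment _ _ _, hyuΩ⟩
  exact Set.disjoint_left.1 hyS hz ⟨hzΩ, hseg hz⟩

end Avoidance

theorem exists_forall_sphere_add_smul_notMem {F : Type*} [NormedAddCommGroup F] [NormedSpace ℂ F]
    [FiniteDimensional ℂ F] {S : Set F} (hS : dimH S + 1 < finrank ℝ F) (p : F) {δ : ℝ}
    (hδ : 0 < δ) : ∃ v ∈ ball 0 δ, ∀ ζ ∈ sphere (0 : ℂ) 1, p + ζ • v ∉ S := by
  have hofReal : ContDiff ℝ 1 ((↑) : ℝ → ℂ) := Complex.ofRealCLM.contDiff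
  obtain ⟨v, hv0, hv⟩ := (dense_compl_image_Icc_prod
    (f := fun q => Complex.exp (-(q.1 * Complex.I)) • (q.2 - p)) (by fun_prop)
    (-Real.pi) Real.pi hS).inter_open_nonempty _ isOpen_ball ⟨0, mem_ball_self hδ⟩
  refine ⟨v, hv0, fun ζ hζ hζS => hv ⟨(ζ.arg, p + ζ • v),
    ⟨⟨(Complex.neg_pi_lt_arg ζ).le, Complex.arg_le_pi ζ⟩, hζS⟩, ?_⟩⟩
  have hζ1 : ‖ζ‖ = 1 := mem_sphere_zero_iff_norm.1 hζ
  have hζexp : Complex.exp (ζ.arg * Complex.I) = ζ := by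
    simpa [hζ1] using Complex.norm_mul_exp_arg_mul_I ζ
  change Complex.exp _ • (p + ζ • v - p) = v
  rw [add_sub_cancel_left, smul_smul, Complex.exp_neg, hζexp,
    inv_mul_cancel₀ (norm_ne_zero_iff.1 (hζ1.trans_ne one_ne_zero)), one_smul]

section MaximumModulus

variable {V ι : Type*} [NormedAddCommGroup V] [NormedSpace ℂ V] {U : Set ℂ} {l : Filter ι}
  {F : ι → ℂ → V}

theorem UniformCauchySeqOn.closure_of_frontier (hU : IsBounded U)
    (hF : ∀ n, DiffContOnCl ℂ (F n) U) (h : UniformCauchySeqOn F l (frontier U)) :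
    UniformCauchySeqOn F l (closure U) := by
  intro u hu
  obtain ⟨ε, hε, hεu⟩ := Metric.mem_uniformity_dist.1 hu
  filter_upwards [h _ (dist_mem_uniformity (half_pos hε))] with n hn z hz
  refine hεu (lt_of_le_of_lt ?_ (half_lt_self hε))
  rw [dist_eq_norm]
  exact Complex.norm_le_of_forall_mem_frontier_norm_le hU ((hF n.1).sub (hF n.2))
    (fun w hw => by simpa [dist_eq_norm] using (hn w hw).le) hz

theorem UniformCauchySeqOn.exists_diffContOnCl_tendstoUniformlyOn [CompleteSpace V] [l.NeBot]
    (hUo : IsOpen U) (hU : IsBounded U) (hF : ∀ n, DiffContOnCl ℂ (F n) U)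
    (h : UniformCauchySeqOn F l (frontier U)) :
    ∃ Φ : ℂ → V, DiffContOnCl ℂ Φ U ∧ TendstoUniformlyOn F Φ l (closure U) := by
  have hcl := h.closure_of_frontier hU hF
  have hlim : TendstoUniformlyOn F (fun z => limUnder l (F · z)) l (closure U) :=
    hcl.tendstoUniformlyOn_of_tendsto fun z hz =>
      tendsto_nhds_limUnder (CompleteSpace.complete (hcl.cauchy_map hz))
  refine ⟨_, ⟨?_, hlim.continuousOn (.of_forall fun n => (hF n).continuousOn)⟩, hlim⟩
  exact (hlim.mono subset_closure).tendstoLocallyUniformlyOn.differentiableOn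
    (.of_forall fun n => (hF n).differentiableOn) hUo

end MaximumModulus

section Runge

variable {k : ℕ} {Ω K : Set (Ek k)}

theorem differentiable_mvPolynomial_eval (q : MvPolynomial (Fin k) ℂ) :
    Differentiable ℂ fun z : Ek k => MvPolynomial.eval (fun i => z i) q :=
  differentiableOn_univ.1 (AnalyticOnNhd.eval_continuousLinearMap
    (EuclideanSpace.equiv (Fin k) ℂ).toContinuousLinearMap q).differentiableOn

theorem IsRunge.exists_tendstoUniformlyOn (hΩ : IsRunge Ω) {f : Ek k → ℂ}
    (hf : DifferentiableOn ℂ f Ω) (hKΩ : K ⊆ Ω) (hK : IsCompact K) :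
    ∃ q : ℕ → MvPolynomial (Fin k) ℂ,
      TendstoUniformlyOn (fun n z => MvPolynomial.eval (fun i => z i) (q n)) f atTop K := by
  choose q hq using fun n : ℕ => hΩ f hf K hKΩ hK (1 / (n + 1)) Nat.one_div_pos_of_nat
  refine ⟨q, Metric.tendstoUniformlyOn_iff.2 fun ε hε => ?_⟩
  obtain ⟨N, hN⟩ := exists_nat_one_div_lt hε
  filter_upwards [eventually_ge_atTop N] with n hn z hz
  rw [dist_eq_norm]
  refine (hq n z hz).trans (lt_of_le_of_lt ?_ hN)
  gcongr

theorem IsRunge.exists_differentiable_tendstoUniformlyOn (hΩ : IsRunge Ω) {f : Ek k → Ek k}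
    (hf : DifferentiableOn ℂ f Ω) (hKΩ : K ⊆ Ω) (hK : IsCompact K) :
    ∃ g : ℕ → Ek k → Ek k, (∀ n, Differentiable ℂ (g n)) ∧ TendstoUniformlyOn g f atTop K := by
  set e := EuclideanSpace.equiv (Fin k) ℂ
  choose q hq using fun i => hΩ.exists_tendstoUniformlyOn
    ((EuclideanSpace.proj i).differentiable.comp_differentiableOn hf) hKΩ hK
  have hcoord : TendstoUniformlyOn (fun n z i => MvPolynomial.eval (fun j => z j) (q i n))
      (fun z => e (f z)) atTop K := by
    refine Metric.tendstoUniformlyOn_iff.2 fun ε hε => ?_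
    filter_upwards [eventually_all.2 fun i => Metric.tendstoUniformlyOn_iff.1 (hq i) ε hε]
      with n hn z hz
    exact (dist_pi_lt_iff hε).2 fun i => hn i z hz
  refine ⟨fun n z => e.symm fun i => MvPolynomial.eval (fun j => z j) (q i n), fun n =>
    e.symm.differentiable.comp (differentiable_pi.2 fun i => differentiable_mvPolynomial_eval _),
    ?_⟩
  exact e.symm.toContinuousLinearMap.uniformContinuous.comp_tendstoUniformlyOn hcoord


theorem IsRunge.mapsTo_closure_of_mapsTo_frontier (hΩ : IsRunge Ω) (hbihol : BiholToCk Ω)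
    {U : Set ℂ} (hUo : IsOpen U) (hU : IsBounded U) {ψ : ℂ → Ek k} (hψ : DiffContOnCl ℂ ψ U)
    (hψU : MapsTo ψ (frontier U) Ω) : MapsTo ψ (closure U) Ω := by
  obtain ⟨H, G, hH, hG, hGH, hHG⟩ := hbihol
  have hK : IsCompact (ψ '' frontier U) :=
    (isCompact_of_isClosed_isBounded isClosed_frontier
      (hU.closure.subset frontier_subset_closure)).image_of_continuousOn
        (hψ.continuousOn.mono frontier_subset_closure)
  obtain ⟨g, hg, hgH⟩ := hΩ.exists_differentiable_tendstoUniformlyOn hH hψU.image_subset hK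
  have hgψ : TendstoUniformlyOn (fun n => g n ∘ ψ) (H ∘ ψ) atTop (frontier U) :=
    (hgH.comp ψ).mono (subset_preimage_image ψ _)
  obtain ⟨Φ, hΦ, hgΦ⟩ := hgψ.uniformCauchySeqOn.exists_diffContOnCl_tendstoUniformlyOn hUo hU
    fun n => (hg n).comp_diffContOnCl hψ
  have hψGΦ : EqOn ψ (G ∘ Φ) (closure U) := by
    refine Complex.eqOn_closure_of_eqOn_frontier hU hψ (hG.comp_diffContOnCl hΦ) fun z hz => ?_
    have hΦz : Φ z = H (ψ z) := tendsto_nhds_unique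
      (hgΦ.tendsto_at (frontier_subset_closure hz)) (hgψ.tendsto_at hz)
    simp [hΦz, hGH _ (hψU hz)]
  exact fun z hz => hψGΦ hz ▸ (hHG _).1

end Runge

theorem runge_FB_boundary_dimension_general (k : ℕ) (Ω : Set (Ek k))
    (hopen : IsOpen Ω)
    (hbihol : BiholToCk Ω) (hRunge : IsRunge Ω) :
    ∀ p ∈ frontier Ω, ∀ ε : ℝ, 0 < ε →
      (2 * k - 1 : ℝ≥0∞) ≤ dimH (frontier Ω ∩ Metric.ball p ε) := by
  intro p hp ε hε
  by_contra! hS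
  have hdim : dimH (frontier Ω ∩ ball p ε) + 1 < finrank ℝ (Ek k) := by
    have hk : 1 ≤ (2 * k : ℝ≥0∞) := (tsub_pos_iff_lt.1 (pos_of_gt hS)).le
    rw [finrank_real_of_complex, finrank_euclideanSpace_fin, Nat.cast_mul, Nat.cast_ofNat,
      ← tsub_add_cancel_of_le hk]
    exact ENNReal.add_lt_add_right ENNReal.one_ne_top hS
  have hdense := ball_subset_closure_of_dimH_frontier_inter_ball_lt hopen
    (frontier_subset_closure hp) hdim
  obtain ⟨v, hv, hvS⟩ := exists_forall_sphere_add_smul_notMem hdim p (half_pos hε)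
  have hcircle : MapsTo (fun ζ : ℂ => p + ζ • v) (frontier (ball 0 1)) Ω := by
    intro ζ hζ
    rw [frontier_ball 0 one_ne_zero] at hζ
    have hmem : p + ζ • v ∈ ball p (ε / 2) := by
      simpa [norm_smul, mem_sphere_zero_iff_norm.1 hζ] using hv
    rw [← hopen.interior_eq, ← closure_sdiff_frontier]
    exact ⟨hdense hmem, fun hfr => hvS ζ hζ ⟨hfr, ball_subset_ball (half_le_self hε.le) hmem⟩⟩
  have hpΩ := hRunge.mapsTo_closure_of_mapsTo_frontier hbihol isOpen_ball isBounded_ball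
    (by fun_prop : Differentiable ℂ fun ζ : ℂ => p + ζ • v).diffContOnCl hcircle
    (subset_closure (mem_ball_self one_pos))
  simp only [zero_smul, add_zero] at hpΩ
  exact (hopen.frontier_eq ▸ hp).2 hpΩ

/-- if `Ω ⊊ ℂ^k` is a nonempty proper open set biholomorphic to `ℂ^k`
which is Runge, then near every boundary point the Hausdorff dimension of `∂Ω` is at
least `2k − 1`. -/
theorem runge_FB_boundary_dimension (k : ℕ) (hk : 2 ≤ k) (Ω : Set (Ek k))
    (hopen : IsOpen Ω) (hne : Ω.Nonempty) (hproper : Ω ≠ Set.univ)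
    (hbihol : BiholToCk Ω) (hRunge : IsRunge Ω) :
    ∀ p ∈ frontier Ω, ∀ ε : ℝ, 0 < ε →
      (2 * k - 1 : ℝ≥0∞) ≤ dimH (frontier Ω ∩ Metric.ball p ε) :=
  runge_FB_boundary_dimension_general k Ω hopen hbihol hRunge

end
end

section
/- Let Ω ⊆ ℂ^k be an open dense set with 0 ∉ Ω, and suppose that for every compact set K ⊆ Ω its polynomial hull K̂ is contained in Ω. Then for every z ∈ ℂ^k the circle {e^{iθ} z : θ ∈ ℝ} intersects the boundary ∂Ω. -/
open Filter Metric Set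
open scoped ENNReal

noncomputable section

/-- The polynomial hull of a set `K ⊆ ℂ^k`. -/
def polyHull {k : ℕ} (K : Set (Ek k)) : Set (Ek k) :=
  {z | ∀ p : MvPolynomial (Fin k) ℂ,
    ‖MvPolynomial.eval (fun i => z i) p‖ ≤ ⨆ w ∈ K, ‖MvPolynomial.eval (fun i => w i) p‖}

/-!
If the circle through `z` avoided `∂Ω = Ωᶜ`, it would be a compact subset of `Ω`. By the maximum
modulus principle applied to `c ↦ p(c z)` on the unit disc, its polynomial hull contains the whole
disc `{c z : |c| ≤ 1}`, hence the point `0 ∉ Ω`.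
-/

theorem IsOpen.frontier_eq_compl_of_dense {X : Type*} [TopologicalSpace X] {s : Set X}
    (hs : IsOpen s) (hd : Dense s) : frontier s = sᶜ := by
  rw [hs.frontier_eq, hd.closure_eq, compl_eq_univ_sdiff]

namespace PolyHull

variable {k : ℕ}

def circleThrough (z : Ek k) : Set (Ek k) := range fun c : Circle => (c : ℂ) • z

theorem isCompact_circleThrough (z : Ek k) : IsCompact (circleThrough z) :=
  isCompact_range (by fun_prop)

theorem continuous_eval (p : MvPolynomial (Fin k) ℂ) :
    Continuous fun w : Ek k => MvPolynomial.eval (fun i => w i) p :=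
  (MvPolynomial.continuous_eval p).comp (by fun_prop)

theorem differentiable_eval_smul (p : MvPolynomial (Fin k) ℂ) (z : Ek k) :
    Differentiable ℂ fun c : ℂ => MvPolynomial.eval (fun i => (c • z) i) p := by
  intro c
  have hcoord : ∀ i, AnalyticAt ℂ (fun c : ℂ => (c • z) i) c := fun i => by
    simp only [PiLp.smul_apply, smul_eq_mul]
    fun_prop
  exact (AnalyticAt.aeval_mvPolynomial hcoord p).differentiableAt

theorem norm_eval_le_iSup {K : Set (Ek k)} (hK : IsCompact K) {w : Ek k} (hw : w ∈ K)
    (p : MvPolynomial (Fin k) ℂ) :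
    ‖MvPolynomial.eval (fun i => w i) p‖ ≤ ⨆ v ∈ K, ‖MvPolynomial.eval (fun i => v i) p‖ := by
  refine le_ciSup₂ (f := fun v (_ : v ∈ K) => ‖MvPolynomial.eval (fun i => v i) p‖) ?_ w hw
  refine (hK.bddAbove_image (continuous_eval p).norm.continuousOn).mono ?_
  rintro _ ⟨_, ⟨v, rfl⟩, ⟨hv, rfl⟩⟩
  exact ⟨v, hv, rfl⟩

theorem smul_mem_polyHull_circleThrough {a : ℂ} (ha : ‖a‖ ≤ 1) (z : Ek k) :
    a • z ∈ polyHull (circleThrough z) := by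
  intro p
  refine Complex.norm_le_of_forall_mem_frontier_norm_le isBounded_ball
    (differentiable_eval_smul p z).diffContOnCl (fun c hc => ?_)
    (by rwa [closure_ball _ one_ne_zero, mem_closedBall_zero_iff])
  rw [frontier_ball _ one_ne_zero] at hc
  exact norm_eval_le_iSup (isCompact_circleThrough z) ⟨⟨c, hc⟩, rfl⟩ p

end PolyHull

/-- if `Ω ⊆ ℂ^k` is open and dense, `0 ∉ Ω`, and the polynomial hull of
every compact subset of `Ω` is contained in `Ω`, then for every `z ∈ ℂ^k` the circle
`{e^{iθ} z : θ ∈ ℝ}` meets `∂Ω`. -/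
theorem circle_meets_boundary (k : ℕ) (Ω : Set (Ek k))
    (hopen : IsOpen Ω) (hdense : Dense Ω) (h0 : (0 : Ek k) ∉ Ω)
    (hhull : ∀ K : Set (Ek k), K ⊆ Ω → IsCompact K → polyHull K ⊆ Ω) :
    ∀ z : Ek k, ∃ θ : ℝ, Complex.exp (θ * Complex.I) • z ∈ frontier Ω := by
  intro z
  by_contra! hz
  have hcircle : PolyHull.circleThrough z ⊆ Ω := by
    rintro _ ⟨c, rfl⟩
    simpa [hopen.frontier_eq_compl_of_dense hdense, ← Circle.coe_exp, Circle.exp_arg]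
      using hz (Complex.arg c)
  have h0hull : (0 : Ek k) ∈ polyHull (PolyHull.circleThrough z) := by
    simpa using PolyHull.smul_mem_polyHull_circleThrough (a := 0) (by simp) z
  exact h0 (hhull _ hcircle (PolyHull.isCompact_circleThrough z) h0hull)

end
end
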